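/- Let h be an FIR filter on ℤⁿ with dilation matrix Λ, q = |det Λ|, polyphase components H_ν(z) (ν ∈ Γ) defined by h_ν(k) = h(Λk + ν), and refinement mask τ(ω) = (1/√q) Σ_k h(k) e^{−ik·ω}. Then for all ω ∈ [−π,π]ⁿ: Σ_{ν∈Γ} |H_ν(e^{iΛ*ω})|² = Σ_{γ∈Γ*} |τ(ω+γ)|². -/
import Mathlib


open Matrix Complex
open scoped Classical

/-- The polyphase component `H_ν` of an FIR filter `h`, evaluated at
`z = e^{iΛ*ω}`: since `z^{−k} = e^{−ik·(Λᵀω)} = e^{−i(Λk)·ω}`, we have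
`H_ν(e^{iΛ*ω}) = Σ_{x ≡ ν (mod Λℤⁿ)} h(x) e^{−i(x−ν)·ω}`. -/
noncomputable def polyphaseEval (n : ℕ) (Λ : Matrix (Fin n) (Fin n) ℤ)
    (h : (Fin n → ℤ) →₀ ℝ) (ν : Fin n → ℤ) (ω : Fin n → ℝ) : ℂ :=
  ∑ x ∈ h.support.filter (fun x => ∃ k : Fin n → ℤ, x = ν + Λ.mulVec k),
    (h x : ℂ) * Complex.exp (-Complex.I * ∑ i, ((x i - ν i : ℤ) : ℂ) * (ω i : ℂ))

/-- The refinement mask `τ(ω) = (1/√q) Σ_k h(k) e^{−ik·ω}`, `q = |det Λ|`. -/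
noncomputable def maskEval (n : ℕ) (Λ : Matrix (Fin n) (Fin n) ℤ)
    (h : (Fin n → ℤ) →₀ ℝ) (ω : Fin n → ℝ) : ℂ :=
  (1 / Real.sqrt Λ.det.natAbs : ℝ) *
    ∑ x ∈ h.support, (h x : ℂ) * Complex.exp (-Complex.I * ∑ i, ((x i : ℤ) : ℂ) * (ω i : ℂ))

lemma aux_index_range (n : ℕ) (A : Matrix (Fin n) (Fin n) ℤ) (hA : A.det ≠ 0) :
    (LinearMap.range A.mulVecLin).toAddSubgroup.index = A.det.natAbs := by
  set N : Submodule ℤ (Fin n → ℤ) := LinearMap.range A.mulVecLin with hN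
  have hinj : Function.Injective A.mulVecLin := by
    intro x y hxy
    have h0 : A.mulVec (x - y) = 0 := by
      have := sub_eq_zero_of_eq hxy
      simpa [Matrix.mulVecLin_apply, Matrix.mulVec_sub] using this
    have := Matrix.eq_zero_of_mulVec_eq_zero hA h0
    exact sub_eq_zero.mp this
  let e : (Fin n → ℤ) ≃ₗ[ℤ] N := LinearEquiv.ofInjective A.mulVecLin hinj
  obtain ⟨m, snf⟩ := N.smithNormalForm (Pi.basisFun ℤ (Fin n))
  have hm : m = n := by
    have h1 : Module.finrank ℤ N = m := by
      simpa using Module.finrank_eq_card_basis snf.bN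
    have h2 : Module.finrank ℤ (Fin n → ℤ) = Module.finrank ℤ N := e.finrank_eq
    have h3 : Module.finrank ℤ (Fin n → ℤ) = n := by simp [Module.finrank_pi]
    omega
  subst hm
  have fbij : Function.Bijective snf.f :=
    (Finite.injective_iff_bijective).mp snf.f.injective
  let fe : Fin m ≃ Fin m := Equiv.ofBijective snf.f fbij
  let e' : (Fin m → ℤ) ≃ₗ[ℤ] N := snf.bM.equiv snf.bN (Equiv.refl _)
  let f1 : (Fin m → ℤ) →ₗ[ℤ] (Fin m → ℤ) := N.subtype ∘ₗ (e' : (Fin m → ℤ) →ₗ[ℤ] N)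
  let f2 : (Fin m → ℤ) →ₗ[ℤ] (Fin m → ℤ) := N.subtype ∘ₗ (e : (Fin m → ℤ) →ₗ[ℤ] N)
  have hf2 : f2 = A.mulVecLin := by
    refine LinearMap.ext fun x => ?_
    exact LinearEquiv.ofInjective_apply (h := hinj) A.mulVecLin x
  have hassoc : Associated (LinearMap.det f1) (LinearMap.det f2) :=
    LinearMap.associated_det_comp_equiv N.subtype e' e
  have hdet2 : LinearMap.det f2 = A.det := by
    rw [hf2, ← Matrix.toLin'_apply', LinearMap.det_toLin']
  -- compute det f1
  have hmat : LinearMap.toMatrix snf.bM snf.bM f1 =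
      fun j => Matrix.diagonal snf.a (fe.symm j) := by
    ext j i
    rw [LinearMap.toMatrix_apply]
    have : f1 (snf.bM i) = snf.a i • snf.bM (fe i) := by
      simp only [f1, LinearMap.comp_apply, LinearEquiv.coe_coe]
      have : e' (snf.bM i) = snf.bN i := snf.bM.equiv_apply _ _ _
      rw [this]
      simpa [fe, Equiv.ofBijective] using snf.snf i
    rw [this, _root_.map_smul, Finsupp.smul_apply, Module.Basis.repr_self, Finsupp.single_apply,
      Matrix.diagonal_apply, smul_eq_mul]
    by_cases hji : fe i = j
    · rw [if_pos hji, if_pos (by rw [← hji, Equiv.symm_apply_apply]), mul_one, ← hji,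
        Equiv.symm_apply_apply]
    · rw [if_neg hji, if_neg (fun hc => hji (by rw [← hc, Equiv.apply_symm_apply])), mul_zero]
  have hdet1 : (LinearMap.det f1).natAbs = (∏ i, snf.a i).natAbs := by
    rw [← LinearMap.det_toMatrix snf.bM, hmat,
      show (fun j => Matrix.diagonal snf.a (fe.symm j)) =
        (Matrix.diagonal snf.a).submatrix (⇑fe.symm) id from rfl,
      Matrix.det_permute, Int.natAbs_mul, Matrix.det_diagonal]
    simp [Int.units_natAbs]
  have hdetA : A.det.natAbs = (∏ i, snf.a i).natAbs := by
    rw [← hdet2, ← Int.natAbs_eq_iff_associated.mpr hassoc, hdet1]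
  rw [snf.toAddSubgroup_index_eq_ite]
  rw [if_pos (by simp)]
  rw [hdetA]
  simp only [Ideal.span_singleton_toAddSubgroup_eq_zmultiples, Int.index_zmultiples]
  exact (map_prod Int.natAbsHom snf.a Finset.univ).symm

lemma aux_card_dual (n : ℕ) (Λ : Matrix (Fin n) (Fin n) ℤ) (hdet : Λ.det ≠ 0)
    (Γs : Finset (Fin n → ℝ))
    (hΓsdual : ∀ γ ∈ Γs, ∃ m : Fin n → ℤ, ∀ i,
      ∑ j, (Λ j i : ℝ) * γ j = 2 * Real.pi * m i)
    (hΓsrep : ∀ v : Fin n → ℝ,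
      (∃ m : Fin n → ℤ, ∀ i, ∑ j, (Λ j i : ℝ) * v j = 2 * Real.pi * m i) →
      ∃! γ, γ ∈ Γs ∧ ∃ m : Fin n → ℤ, ∀ i, v i = γ i + 2 * Real.pi * m i) :
    Γs.card = Λ.det.natAbs := by
  have hpi : (2 * Real.pi) ≠ 0 := by positivity
  set B : Matrix (Fin n) (Fin n) ℝ := (Λ.map (Int.cast : ℤ → ℝ))ᵀ with hB
  have hBd : B.det ≠ 0 := by
    have hmd : (Λ.map (Int.cast : ℤ → ℝ)).det = ((Λ.det : ℤ) : ℝ) := by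
      rw [show Λ.map (Int.cast : ℤ → ℝ) = (Int.castRingHom ℝ).mapMatrix Λ from rfl,
        ← RingHom.map_det]
      rfl
    rw [hB, Matrix.det_transpose, hmd]
    exact_mod_cast hdet
  have hBapp : ∀ (w : Fin n → ℝ) (i : Fin n), B.mulVec w i = ∑ j, (Λ j i : ℝ) * w j := by
    intro w i
    simp [hB, Matrix.mulVec, dotProduct]
  have hBinj : ∀ w : Fin n → ℝ, (∀ i, ∑ j, (Λ j i : ℝ) * w j = 0) → w = 0 := by
    intro w hw
    refine Matrix.eq_zero_of_mulVec_eq_zero hBd (funext fun i => ?_)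
    rw [hBapp]; exact hw i
  have hBsolve : ∀ c : Fin n → ℝ, ∃ v : Fin n → ℝ, ∀ i, ∑ j, (Λ j i : ℝ) * v j = c i := by
    intro c
    refine ⟨B⁻¹.mulVec c, fun i => ?_⟩
    rw [← hBapp, Matrix.mulVec_mulVec, Matrix.mul_nonsing_inv _ (isUnit_iff_ne_zero.mpr hBd),
      Matrix.one_mulVec]
  have uniq : ∀ γ ∈ Γs, ∀ γ' ∈ Γs, (∃ mm : Fin n → ℤ, ∀ i, γ i = γ' i + 2 * Real.pi * mm i) →
      γ = γ' := by
    intro γ hγ γ' hγ' hmm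
    obtain ⟨γ₀, -, hu⟩ := hΓsrep γ (hΓsdual γ hγ)
    have h1 : γ = γ₀ := hu γ ⟨hγ, 0, fun i => by simp⟩
    have h2 : γ' = γ₀ := hu γ' ⟨hγ', hmm⟩
    rw [h1, h2]
  set H : AddSubgroup (Fin n → ℤ) := (LinearMap.range Λᵀ.mulVecLin).toAddSubgroup with hH
  have hHmem : ∀ x : Fin n → ℤ, x ∈ H ↔ ∃ k : Fin n → ℤ, Λᵀ.mulVec k = x := by
    intro x
    simp [hH, LinearMap.mem_range, Matrix.mulVecLin_apply, Matrix.mulVec_transpose]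
  have hmulVecT : ∀ (k : Fin n → ℤ) (i : Fin n), Λᵀ.mulVec k i = ∑ j, Λ j i * k j := by
    intro k i
    simp [Matrix.mulVec, dotProduct]
  choose mv hmv using fun γ : {x // x ∈ Γs} => hΓsdual γ.1 γ.2
  let φ : {x // x ∈ Γs} → ((Fin n → ℤ) ⧸ H) := fun γ => QuotientAddGroup.mk (mv γ)
  have hinj : Function.Injective φ := by
    intro γ₁ γ₂ hφ
    rw [QuotientAddGroup.eq] at hφ
    rw [hHmem] at hφ
    obtain ⟨k, hk⟩ := hφ
    have hw : (fun j => (γ₂ : Fin n → ℝ) j - (γ₁ : Fin n → ℝ) j - 2 * Real.pi * k j) = 0 := by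
      refine hBinj _ fun i => ?_
      have e1 := hmv γ₁ i
      have e2 := hmv γ₂ i
      have e3 : ∑ j, (Λ j i : ℝ) * ((γ₂ : Fin n → ℝ) j - (γ₁ : Fin n → ℝ) j
          - 2 * Real.pi * k j) = ∑ j, (Λ j i : ℝ) * (γ₂ : Fin n → ℝ) j
          - ∑ j, (Λ j i : ℝ) * (γ₁ : Fin n → ℝ) j
          - 2 * Real.pi * ∑ j, (Λ j i : ℝ) * k j := by
        rw [Finset.mul_sum]
        rw [← Finset.sum_sub_distrib, ← Finset.sum_sub_distrib]
        exact Finset.sum_congr rfl fun j _ => by ring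
      have e4 : ∑ j, (Λ j i : ℝ) * (k j : ℝ) = ((Λᵀ.mulVec k i : ℤ) : ℝ) := by
        rw [hmulVecT]
        push_cast
        rfl
      have e5 : Λᵀ.mulVec k i = mv γ₂ i - mv γ₁ i := by
        have := congrFun hk i
        simpa [neg_add_eq_sub] using this
      rw [e3, e1, e2, e4, e5]
      push_cast
      ring
    have hek : ∃ mm : Fin n → ℤ, ∀ i, (γ₂ : Fin n → ℝ) i = (γ₁ : Fin n → ℝ) i
        + 2 * Real.pi * mm i := by
      refine ⟨k, fun i => ?_⟩
      have := congrFun hw i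
      simp only [Pi.zero_apply] at this
      linarith
    exact (Subtype.ext (uniq _ γ₂.2 _ γ₁.2 hek)).symm
  have hsurj : Function.Surjective φ := by
    intro b
    obtain ⟨x, rfl⟩ := QuotientAddGroup.mk_surjective b
    obtain ⟨v, hv⟩ := hBsolve (fun i => 2 * Real.pi * x i)
    obtain ⟨γ, ⟨hγΓs, mm, hmm⟩, -⟩ := hΓsrep v ⟨x, hv⟩
    refine ⟨⟨γ, hγΓs⟩, ?_⟩
    show QuotientAddGroup.mk (mv ⟨γ, hγΓs⟩) = QuotientAddGroup.mk x
    rw [QuotientAddGroup.eq, hHmem]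
    refine ⟨mm, funext fun i => ?_⟩
    have h1 : ∑ j, (Λ j i : ℝ) * γ j = 2 * Real.pi * mv ⟨γ, hγΓs⟩ i := hmv ⟨γ, hγΓs⟩ i
    have h2 : ∑ j, (Λ j i : ℝ) * v j = 2 * Real.pi * x i := hv i
    have h3 : ∑ j, (Λ j i : ℝ) * v j = ∑ j, (Λ j i : ℝ) * γ j
        + 2 * Real.pi * ∑ j, (Λ j i : ℝ) * mm j := by
      rw [Finset.mul_sum, ← Finset.sum_add_distrib]
      refine Finset.sum_congr rfl fun j _ => ?_
      rw [hmm j]; ring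
    have h4 : ∑ j, (Λ j i : ℝ) * mm j = x i - mv ⟨γ, hγΓs⟩ i := by
      have h5 : 2 * Real.pi * (∑ j, (Λ j i : ℝ) * mm j)
          = 2 * Real.pi * ((x i : ℝ) - mv ⟨γ, hγΓs⟩ i) := by
        rw [h3, h1] at h2; ring_nf; ring_nf at h2; linarith
      exact mul_left_cancel₀ hpi h5
    have : ((Λᵀ.mulVec mm i : ℤ) : ℝ) = (((-mv ⟨γ, hγΓs⟩ + x) i : ℤ) : ℝ) := by
      rw [hmulVecT]
      push_cast [Pi.add_apply, Pi.neg_apply]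
      rw [show ∑ j, ((Λ j i : ℝ)) * (mm j : ℝ) = ∑ j, (Λ j i : ℝ) * mm j from rfl, h4]
      ring
    exact_mod_cast this
  calc Γs.card = Nat.card {x // x ∈ Γs} := (Nat.card_eq_finsetCard _).symm
    _ = Nat.card ((Fin n → ℤ) ⧸ H) := Nat.card_congr (Equiv.ofBijective φ ⟨hinj, hsurj⟩)
    _ = H.index := rfl
    _ = Λᵀ.det.natAbs := aux_index_range n Λᵀ (by rwa [Matrix.det_transpose])
    _ = Λ.det.natAbs := by rw [Matrix.det_transpose]

lemma aux_char_sum (n : ℕ) (Λ : Matrix (Fin n) (Fin n) ℤ) (hdet : Λ.det ≠ 0)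
    (Γs : Finset (Fin n → ℝ))
    (hΓsdual : ∀ γ ∈ Γs, ∃ m : Fin n → ℤ, ∀ i,
      ∑ j, (Λ j i : ℝ) * γ j = 2 * Real.pi * m i)
    (hΓsrep : ∀ v : Fin n → ℝ,
      (∃ m : Fin n → ℤ, ∀ i, ∑ j, (Λ j i : ℝ) * v j = 2 * Real.pi * m i) →
      ∃! γ, γ ∈ Γs ∧ ∃ m : Fin n → ℤ, ∀ i, v i = γ i + 2 * Real.pi * m i)
    (d : Fin n → ℤ) :
    ∑ γ ∈ Γs, Complex.exp (-Complex.I * ∑ i, (d i : ℂ) * (γ i : ℂ)) =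
      if ∃ k : Fin n → ℤ, d = Λ.mulVec k then ((Λ.det.natAbs : ℕ) : ℂ) else 0 := by
  have hpi : (2 * Real.pi) ≠ 0 := by positivity
  have Ecast : ∀ γ : Fin n → ℝ, (∑ i, (d i : ℂ) * (γ i : ℂ))
      = (((∑ i, (d i : ℝ) * γ i : ℝ)) : ℂ) := by
    intro γ
    push_cast
    rfl
  have Eone : ∀ (t : ℝ), (∃ z : ℤ, t = 2 * Real.pi * z) →
      Complex.exp (-Complex.I * (t : ℂ)) = 1 := by
    rintro t ⟨z, rfl⟩
    rw [show (-Complex.I * ((2 * Real.pi * z : ℝ) : ℂ))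
        = ((-z : ℤ) : ℂ) * (2 * (Real.pi : ℂ) * Complex.I) by push_cast; ring]
    exact Complex.exp_int_mul_two_pi_mul_I _
  have Eshift : ∀ (γ δ : Fin n → ℝ) (m : Fin n → ℤ), (∀ i, γ i = δ i + 2 * Real.pi * m i) →
      Complex.exp (-Complex.I * ((∑ i, (d i : ℝ) * γ i : ℝ) : ℂ))
        = Complex.exp (-Complex.I * ((∑ i, (d i : ℝ) * δ i : ℝ) : ℂ)) := by
    intro γ δ m hm
    have hs : (∑ i, (d i : ℝ) * γ i)
        = (∑ i, (d i : ℝ) * δ i) + 2 * Real.pi * ((∑ i, d i * m i : ℤ) : ℝ) := by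
      have step : ∀ i ∈ Finset.univ, (d i : ℝ) * γ i
          = (d i : ℝ) * δ i + 2 * Real.pi * ((d i * m i : ℤ) : ℝ) := fun i _ => by
        rw [hm i]; push_cast; ring
      rw [Finset.sum_congr rfl step, Finset.sum_add_distrib]
      congr 1
      push_cast
      rw [Finset.mul_sum]
    rw [hs, Complex.ofReal_add, mul_add, Complex.exp_add,
      Eone _ ⟨∑ i, d i * m i, rfl⟩, mul_one]
  by_cases hcase : ∃ k : Fin n → ℤ, d = Λ.mulVec k
  · rw [if_pos hcase]
    obtain ⟨k, hk⟩ := hcase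
    have hone : ∀ γ ∈ Γs, Complex.exp (-Complex.I * ∑ i, (d i : ℂ) * (γ i : ℂ)) = 1 := by
      intro γ hγ
      obtain ⟨m, hm⟩ := hΓsdual γ hγ
      rw [Ecast]
      apply Eone
      refine ⟨∑ j, k j * m j, ?_⟩
      have hd : ∀ i, (d i : ℝ) = ∑ j, (Λ i j : ℝ) * k j := by
        intro i
        rw [hk]
        push_cast [Matrix.mulVec, dotProduct]
        rfl
      calc ∑ i, (d i : ℝ) * γ i = ∑ i, ∑ j, (Λ i j : ℝ) * k j * γ i := by
            refine Finset.sum_congr rfl fun i _ => ?_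
            rw [hd i, Finset.sum_mul]
        _ = ∑ j, ∑ i, (Λ i j : ℝ) * k j * γ i := Finset.sum_comm
        _ = ∑ j, (k j : ℝ) * (∑ i, (Λ i j : ℝ) * γ i) := by
            refine Finset.sum_congr rfl fun j _ => ?_
            rw [Finset.mul_sum]
            exact Finset.sum_congr rfl fun i _ => by ring
        _ = ∑ j, (k j : ℝ) * (2 * Real.pi * m j) := by
            refine Finset.sum_congr rfl fun j _ => ?_
            rw [hm j]
        _ = 2 * Real.pi * ∑ j, ((k j * m j : ℤ) : ℝ) := by
            rw [Finset.mul_sum]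
            exact Finset.sum_congr rfl fun j _ => by push_cast; ring
        _ = 2 * Real.pi * ((∑ j, k j * m j : ℤ) : ℝ) := by
            congr 1
            push_cast
            rfl
    rw [Finset.sum_congr rfl hone, Finset.sum_const, nsmul_eq_mul, mul_one,
      aux_card_dual n Λ hdet Γs hΓsdual hΓsrep]
  · rw [if_neg hcase]
    set B : Matrix (Fin n) (Fin n) ℝ := Λ.map (Int.cast : ℤ → ℝ) with hB
    have hBd : B.det ≠ 0 := by
      have hmd : B.det = ((Λ.det : ℤ) : ℝ) := by
        rw [hB, show Λ.map (Int.cast : ℤ → ℝ) = (Int.castRingHom ℝ).mapMatrix Λ from rfl,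
          ← RingHom.map_det]
        rfl
      rw [hmd]
      exact_mod_cast hdet
    have hBunit : IsUnit B.det := isUnit_iff_ne_zero.mpr hBd
    set u : Fin n → ℝ := B⁻¹.mulVec (fun i => (d i : ℝ)) with hu
    have huB : ∀ i, ∑ j, (B i j) * u j = (d i : ℝ) := by
      intro i
      have : B.mulVec u = fun i => (d i : ℝ) := by
        rw [hu, Matrix.mulVec_mulVec, Matrix.mul_nonsing_inv _ hBunit, Matrix.one_mulVec]
      have := congrFun this i
      simpa [Matrix.mulVec, dotProduct] using this
    have hj0 : ∃ j₀, ¬∃ z : ℤ, u j₀ = (z : ℝ) := by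
      by_contra hno
      push_neg at hno
      choose z hz using fun j => hno j
      refine hcase ⟨z, funext fun i => ?_⟩
      have : ((d i : ℤ) : ℝ) = ((Λ.mulVec z i : ℤ) : ℝ) := by
        rw [← huB i]
        push_cast [Matrix.mulVec, dotProduct]
        refine Finset.sum_congr rfl fun j _ => ?_
        rw [← hz j]
        rfl
      exact_mod_cast this
    obtain ⟨j₀, hj₀⟩ := hj0
    have hmul1 : Bᵀ * (B⁻¹)ᵀ = 1 := by
      rw [← Matrix.transpose_mul, Matrix.nonsing_inv_mul _ hBunit, Matrix.transpose_one]
    set v : Fin n → ℝ := fun i => 2 * Real.pi * ((B⁻¹)ᵀ.mulVec (Pi.single j₀ (1 : ℝ)) i)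
      with hv
    have hvdual : ∀ i, ∑ j, (Λ j i : ℝ) * v j
        = 2 * Real.pi * (((Pi.single j₀ (1 : ℤ) : Fin n → ℤ) i : ℤ) : ℝ) := by
      intro i
      have h1 : ∑ j, (Λ j i : ℝ) * v j
          = 2 * Real.pi * ((Bᵀ *ᵥ ((B⁻¹)ᵀ *ᵥ Pi.single j₀ (1 : ℝ))) i) := by
        rw [show ((Bᵀ *ᵥ ((B⁻¹)ᵀ *ᵥ Pi.single j₀ (1 : ℝ))) i)
            = ∑ j, (Λ j i : ℝ) * ((B⁻¹)ᵀ *ᵥ Pi.single j₀ (1 : ℝ)) j from by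
          simp [Matrix.mulVec, dotProduct, hB, Matrix.map_apply], Finset.mul_sum]
        refine Finset.sum_congr rfl fun j _ => ?_
        rw [hv]
        ring
      rw [h1, Matrix.mulVec_mulVec, hmul1, Matrix.one_mulVec]
      congr 1
      by_cases h : i = j₀ <;> simp [Pi.single_apply, h]
    have hw : ∀ i, ((B⁻¹)ᵀ *ᵥ Pi.single j₀ (1 : ℝ)) i = B⁻¹ j₀ i := by
      intro i
      simp [Matrix.mulVec, dotProduct, Pi.single_apply, mul_ite]
    have husum : u j₀ = ∑ i, B⁻¹ j₀ i * (d i : ℝ) := by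
      rw [hu]
      simp [Matrix.mulVec, dotProduct]
    have hvd : ∑ i, (d i : ℝ) * v i = 2 * Real.pi * u j₀ := by
      rw [husum, Finset.mul_sum]
      refine Finset.sum_congr rfl fun i _ => ?_
      simp only [hv]
      rw [hw i]
      ring
    obtain ⟨γ₀, ⟨hγ₀Γs, m₀, hm₀⟩, -⟩ := hΓsrep v ⟨Pi.single j₀ 1, hvdual⟩
    have hEγ₀ : Complex.exp (-Complex.I * ((∑ i, (d i : ℝ) * γ₀ i : ℝ) : ℂ)) ≠ 1 := by
      have hsum0 : ∑ i, (d i : ℝ) * γ₀ i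
          = 2 * Real.pi * (u j₀ - ((∑ i, d i * m₀ i : ℤ) : ℝ)) := by
        have step : ∀ i ∈ Finset.univ, (d i : ℝ) * γ₀ i
            = (d i : ℝ) * v i - 2 * Real.pi * ((d i * m₀ i : ℤ) : ℝ) := fun i _ => by
          rw [show γ₀ i = v i - 2 * Real.pi * (m₀ i : ℝ) from by linarith [hm₀ i]]
          push_cast
          ring
        rw [Finset.sum_congr rfl step, Finset.sum_sub_distrib, hvd, ← Finset.mul_sum]
        push_cast
        ring
      intro hone
      rw [hsum0, Complex.exp_eq_one_iff] at hone
      obtain ⟨z, hz⟩ := hone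
      have hceq : ((2 * Real.pi * (u j₀ - ((∑ i, d i * m₀ i : ℤ) : ℝ)) : ℝ) : ℂ)
          = (((-z : ℤ) * (2 * Real.pi) : ℝ) : ℂ) := by
        refine mul_left_cancel₀ (neg_ne_zero.mpr Complex.I_ne_zero) ?_
        rw [hz]
        push_cast
        ring
      have treal : 2 * Real.pi * (u j₀ - ((∑ i, d i * m₀ i : ℤ) : ℝ))
          = ((-z : ℤ) : ℝ) * (2 * Real.pi) := by exact_mod_cast hceq
      refine hj₀ ⟨(∑ i, d i * m₀ i) - z, ?_⟩
      refine mul_left_cancel₀ hpi ?_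
      push_cast
      push_cast at treal
      linarith
    have uniq : ∀ γ ∈ Γs, ∀ γ' ∈ Γs,
        (∃ mm : Fin n → ℤ, ∀ i, γ i = γ' i + 2 * Real.pi * mm i) → γ = γ' := by
      intro γ hγ γ' hγ' hmm
      obtain ⟨γc, -, hc⟩ := hΓsrep γ (hΓsdual γ hγ)
      have h1 : γ = γc := hc γ ⟨hγ, 0, fun i => by simp⟩
      have h2 : γ' = γc := hc γ' ⟨hγ', hmm⟩
      rw [h1, h2]
    obtain ⟨mγ₀, hmγ₀⟩ := hΓsdual γ₀ hγ₀Γs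
    have htrans : ∀ (ε : ℤ), ∀ γ ∈ Γs, ∃ γ', γ' ∈ Γs ∧
        ∃ m : Fin n → ℤ, ∀ i, γ i + (ε : ℝ) * γ₀ i = γ' i + 2 * Real.pi * m i := by
      intro ε γ hγ
      obtain ⟨mγ, hmγ⟩ := hΓsdual γ hγ
      have hdual : ∃ m : Fin n → ℤ, ∀ i,
          ∑ j, (Λ j i : ℝ) * (γ j + (ε : ℝ) * γ₀ j) = 2 * Real.pi * m i := by
        refine ⟨fun i => mγ i + ε * mγ₀ i, fun i => ?_⟩
        have e1 : ∑ j, (Λ j i : ℝ) * (γ j + (ε : ℝ) * γ₀ j)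
            = (∑ j, (Λ j i : ℝ) * γ j) + (ε : ℝ) * ∑ j, (Λ j i : ℝ) * γ₀ j := by
          rw [Finset.mul_sum, ← Finset.sum_add_distrib]
          exact Finset.sum_congr rfl fun j _ => by ring
        rw [e1, hmγ i, hmγ₀ i]
        push_cast
        ring
      obtain ⟨γ', hp, -⟩ := hΓsrep (fun i => γ i + (ε : ℝ) * γ₀ i) hdual
      exact ⟨γ', hp.1, hp.2⟩
    choose ρ hρmem hρspec using fun γ (hγ : γ ∈ Γs) => htrans 1 γ hγ
    choose ρ' hρ'mem hρ'spec using fun γ (hγ : γ ∈ Γs) => htrans (-1) γ hγ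
    set E : (Fin n → ℝ) → ℂ :=
      fun γ => Complex.exp (-Complex.I * ((∑ i, (d i : ℝ) * γ i : ℝ) : ℂ)) with hE
    set S : ℂ := ∑ γ ∈ Γs, E γ with hS
    have hmulS : E γ₀ * S = S := by
      rw [hS, Finset.mul_sum]
      refine Finset.sum_bij' (fun γ hγ => ρ γ hγ) (fun γ hγ => ρ' γ hγ)
        (fun γ hγ => hρmem γ hγ) (fun γ hγ => hρ'mem γ hγ) ?_ ?_ ?_
      · intro γ hγ
        obtain ⟨m1, hm1⟩ := hρspec γ hγ
        obtain ⟨m2, hm2⟩ := hρ'spec (ρ γ hγ) (hρmem γ hγ)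
        refine (uniq γ hγ _ (hρ'mem _ _) ⟨m1 + m2, fun i => ?_⟩).symm
        have a1 := hm1 i
        have a2 := hm2 i
        push_cast [Pi.add_apply] at a1 a2 ⊢
        linarith
      · intro γ hγ
        obtain ⟨m1, hm1⟩ := hρ'spec γ hγ
        obtain ⟨m2, hm2⟩ := hρspec (ρ' γ hγ) (hρ'mem γ hγ)
        refine (uniq γ hγ _ (hρmem _ _) ⟨m1 + m2, fun i => ?_⟩).symm
        have a1 := hm1 i
        have a2 := hm2 i
        push_cast [Pi.add_apply] at a1 a2 ⊢
        linarith
      · intro γ hγ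
        obtain ⟨m1, hm1⟩ := hρspec γ hγ
        have hEsh := Eshift (fun i => γ i + γ₀ i) (ρ γ hγ) m1 (fun i => by
          have := hm1 i
          push_cast at this ⊢
          linarith)
        have hcomb : (∑ i, (d i : ℝ) * γ₀ i) + (∑ i, (d i : ℝ) * γ i)
            = ∑ i, (d i : ℝ) * (γ i + γ₀ i) := by
          rw [← Finset.sum_add_distrib]
          exact Finset.sum_congr rfl fun i _ => by ring
        calc E γ₀ * E γ
            = Complex.exp (-Complex.I * ((∑ i, (d i : ℝ) * (γ i + γ₀ i) : ℝ) : ℂ)) := by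
              rw [hE]
              simp only
              rw [← Complex.exp_add, ← mul_add, ← Complex.ofReal_add, hcomb]
          _ = E (ρ γ hγ) := hEsh
    have hfactor : (E γ₀ - 1) * S = 0 := by rw [sub_mul, hmulS, one_mul, sub_self]
    have hS0 : S = 0 := by
      rcases mul_eq_zero.mp hfactor with hx | hx
      · exact absurd (sub_eq_zero.mp hx) hEγ₀
      · exact hx
    calc ∑ γ ∈ Γs, Complex.exp (-Complex.I * ∑ i, (d i : ℂ) * (γ i : ℂ))
        = S := Finset.sum_congr rfl fun γ _ => by rw [Ecast]
      _ = 0 := hS0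

/-- the polyphase identity
`Σ_{ν∈Γ} |H_ν(e^{iΛ*ω})|² = Σ_{γ∈Γ*} |τ(ω+γ)|²` for all `ω ∈ [−π,π]ⁿ`. -/
theorem polyphase_mask_identity (n : ℕ) (Λ : Matrix (Fin n) (Fin n) ℤ)
    (hdet : Λ.det ≠ 0) (h : (Fin n → ℤ) →₀ ℝ)
    (Γ : Finset (Fin n → ℤ))
    (hΓ : ∀ x : Fin n → ℤ, ∃! ν, ν ∈ Γ ∧ ∃ k : Fin n → ℤ, x = ν + Λ.mulVec k)
    (Γs : Finset (Fin n → ℝ))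
    (hΓs0 : (0 : Fin n → ℝ) ∈ Γs)
    (hΓsdual : ∀ γ ∈ Γs, ∃ m : Fin n → ℤ, ∀ i,
      ∑ j, (Λ j i : ℝ) * γ j = 2 * Real.pi * m i)
    (hΓsrep : ∀ v : Fin n → ℝ,
      (∃ m : Fin n → ℤ, ∀ i, ∑ j, (Λ j i : ℝ) * v j = 2 * Real.pi * m i) →
      ∃! γ, γ ∈ Γs ∧ ∃ m : Fin n → ℤ, ∀ i, v i = γ i + 2 * Real.pi * m i)
    (ω : Fin n → ℝ) (hω : ∀ i, ω i ∈ Set.Icc (-Real.pi) Real.pi) :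
    ∑ ν ∈ Γ, Complex.normSq (polyphaseEval n Λ h ν ω) =
      ∑ γ ∈ Γs, Complex.normSq (maskEval n Λ h (ω + γ)) := by
  have hq0 : 0 < Λ.det.natAbs := Int.natAbs_pos.mpr hdet
  have hqC : ((Λ.det.natAbs : ℕ) : ℂ) ≠ 0 := by
    exact_mod_cast Nat.cast_ne_zero.mpr hq0.ne'
  set g : (Fin n → ℤ) → (Fin n → ℤ) → ℂ := fun x y =>
    (h x : ℂ) * (h y : ℂ) *
      Complex.exp (-Complex.I * ∑ i, ((x i - y i : ℤ) : ℂ) * (ω i : ℂ)) with hg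
  have hconj : ∀ S : ℂ, (starRingEnd ℂ) S = S →
      (starRingEnd ℂ) (Complex.exp (-Complex.I * S)) = Complex.exp (Complex.I * S) := by
    intro S hS
    rw [← Complex.exp_conj, _root_.map_mul, map_neg, Complex.conj_I, hS, neg_neg]
  -- left expansion
  have hL : ∀ ν : Fin n → ℤ, ((Complex.normSq (polyphaseEval n Λ h ν ω) : ℝ) : ℂ)
      = ∑ x ∈ h.support.filter (fun x => ∃ k : Fin n → ℤ, x = ν + Λ.mulVec k),
        ∑ y ∈ h.support.filter (fun x => ∃ k : Fin n → ℤ, x = ν + Λ.mulVec k), g x y := by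
    intro ν
    rw [← Complex.mul_conj]
    simp only [polyphaseEval]
    rw [map_sum, Finset.sum_mul_sum]
    refine Finset.sum_congr rfl fun x hx => Finset.sum_congr rfl fun y hy => ?_
    rw [_root_.map_mul, hconj _ (by simp [map_sum, _root_.map_mul, Complex.conj_ofReal]),
      Complex.conj_ofReal]
    have e : (∑ i, ((x i - ν i : ℤ) : ℂ) * (ω i : ℂ))
        - (∑ i, ((y i - ν i : ℤ) : ℂ) * (ω i : ℂ))
        = ∑ i, ((x i - y i : ℤ) : ℂ) * (ω i : ℂ) := by
      rw [← Finset.sum_sub_distrib]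
      refine Finset.sum_congr rfl fun i _ => ?_
      push_cast
      ring
    have hsum : (-Complex.I * ∑ i, ((x i - ν i : ℤ) : ℂ) * (ω i : ℂ))
        + (Complex.I * ∑ i, ((y i - ν i : ℤ) : ℂ) * (ω i : ℂ))
        = -Complex.I * ∑ i, ((x i - y i : ℤ) : ℂ) * (ω i : ℂ) := by
      linear_combination (-Complex.I) * e
    calc ((h x : ℂ) * Complex.exp (-Complex.I * ∑ i, ((x i - ν i : ℤ) : ℂ) * (ω i : ℂ)))
          * ((h y : ℂ) * Complex.exp (Complex.I * ∑ i, ((y i - ν i : ℤ) : ℂ) * (ω i : ℂ)))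
        = (h x : ℂ) * (h y : ℂ) *
          (Complex.exp (-Complex.I * ∑ i, ((x i - ν i : ℤ) : ℂ) * (ω i : ℂ))
            * Complex.exp (Complex.I * ∑ i, ((y i - ν i : ℤ) : ℂ) * (ω i : ℂ))) := by ring
      _ = g x y := by rw [← Complex.exp_add, hsum]
  -- right expansion
  have hR : ∀ γ : Fin n → ℝ, ((Complex.normSq (maskEval n Λ h (ω + γ)) : ℝ) : ℂ)
      = (1 / ((Λ.det.natAbs : ℕ) : ℂ)) * ∑ x ∈ h.support, ∑ y ∈ h.support,
          g x y * Complex.exp (-Complex.I * ∑ i, ((x i - y i : ℤ) : ℂ) * (γ i : ℂ)) := by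
    intro γ
    simp only [maskEval]
    rw [Complex.normSq_mul, Complex.normSq_ofReal]
    have hrr : (1 / Real.sqrt (Λ.det.natAbs : ℕ)) * (1 / Real.sqrt (Λ.det.natAbs : ℕ))
        = 1 / ((Λ.det.natAbs : ℕ) : ℝ) := by
      rw [div_mul_div_comm, one_mul, Real.mul_self_sqrt (by positivity)]
    rw [hrr, Complex.ofReal_mul]
    congr 1
    · push_cast
      ring
    rw [← Complex.mul_conj, map_sum, Finset.sum_mul_sum]
    refine Finset.sum_congr rfl fun x hx => Finset.sum_congr rfl fun y hy => ?_
    rw [_root_.map_mul, hconj _ (by simp [map_sum, _root_.map_mul, Complex.conj_ofReal]),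
      Complex.conj_ofReal]
    have e : (∑ i, ((x i : ℤ) : ℂ) * (((ω + γ) i : ℝ) : ℂ))
        - (∑ i, ((y i : ℤ) : ℂ) * (((ω + γ) i : ℝ) : ℂ))
        = (∑ i, ((x i - y i : ℤ) : ℂ) * (ω i : ℂ))
          + (∑ i, ((x i - y i : ℤ) : ℂ) * (γ i : ℂ)) := by
      rw [← Finset.sum_add_distrib, ← Finset.sum_sub_distrib]
      refine Finset.sum_congr rfl fun i _ => ?_
      push_cast [Pi.add_apply]
      ring
    have hsum : (-Complex.I * ∑ i, ((x i : ℤ) : ℂ) * (((ω + γ) i : ℝ) : ℂ))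
        + (Complex.I * ∑ i, ((y i : ℤ) : ℂ) * (((ω + γ) i : ℝ) : ℂ))
        = (-Complex.I * ∑ i, ((x i - y i : ℤ) : ℂ) * (ω i : ℂ))
          + (-Complex.I * ∑ i, ((x i - y i : ℤ) : ℂ) * (γ i : ℂ)) := by
      linear_combination (-Complex.I) * e
    calc ((h x : ℂ) * Complex.exp (-Complex.I * ∑ i, ((x i : ℤ) : ℂ) * (((ω + γ) i : ℝ) : ℂ)))
          * ((h y : ℂ) * Complex.exp (Complex.I * ∑ i, ((y i : ℤ) : ℂ) * (((ω + γ) i : ℝ) : ℂ)))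
        = (h x : ℂ) * (h y : ℂ) *
          Complex.exp ((-Complex.I * ∑ i, ((x i : ℤ) : ℂ) * (((ω + γ) i : ℝ) : ℂ))
            + (Complex.I * ∑ i, ((y i : ℤ) : ℂ) * (((ω + γ) i : ℝ) : ℂ))) := by
          rw [Complex.exp_add]; ring
      _ = g x y * Complex.exp (-Complex.I * ∑ i, ((x i - y i : ℤ) : ℂ) * (γ i : ℂ)) := by
          rw [hsum, Complex.exp_add, hg]; ring
  -- coset double-counting for the left side
  have hcosetL : ∑ ν ∈ Γ, ∑ x ∈ h.support.filter (fun x => ∃ k : Fin n → ℤ, x = ν + Λ.mulVec k),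
        ∑ y ∈ h.support.filter (fun x => ∃ k : Fin n → ℤ, x = ν + Λ.mulVec k), g x y
      = ∑ x ∈ h.support, ∑ y ∈ h.support,
          (if ∃ k : Fin n → ℤ, x = y + Λ.mulVec k then g x y else 0) := by
    have h1 : ∀ ν : Fin n → ℤ,
        ∑ x ∈ h.support.filter (fun x => ∃ k : Fin n → ℤ, x = ν + Λ.mulVec k),
          ∑ y ∈ h.support.filter (fun x => ∃ k : Fin n → ℤ, x = ν + Λ.mulVec k), g x y
        = ∑ x ∈ h.support, ∑ y ∈ h.support,
            (if ((∃ k : Fin n → ℤ, x = ν + Λ.mulVec k) ∧ ∃ k : Fin n → ℤ, y = ν + Λ.mulVec k)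
              then g x y else 0) := by
      intro ν
      rw [Finset.sum_filter]
      refine Finset.sum_congr rfl fun x _ => ?_
      by_cases hx : ∃ k : Fin n → ℤ, x = ν + Λ.mulVec k
      · rw [if_pos hx, Finset.sum_filter]
        exact Finset.sum_congr rfl fun y _ => by simp [hx]
      · rw [if_neg hx]
        refine (Finset.sum_eq_zero fun y _ => ?_).symm
        simp [hx]
    rw [Finset.sum_congr rfl fun ν _ => h1 ν, Finset.sum_comm]
    refine Finset.sum_congr rfl fun x hx => ?_
    rw [Finset.sum_comm]
    refine Finset.sum_congr rfl fun y hy => ?_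
    obtain ⟨ν₀, ⟨hν₀Γ, hx0⟩, huniq⟩ := hΓ x
    by_cases hxy : ∃ k : Fin n → ℤ, x = y + Λ.mulVec k
    · rw [if_pos hxy]
      obtain ⟨k0, hk0⟩ := hxy
      obtain ⟨k1, hk1⟩ := hx0
      have hy0 : ∃ k : Fin n → ℤ, y = ν₀ + Λ.mulVec k := by
        refine ⟨k1 - k0, ?_⟩
        have : y = x - Λ.mulVec k0 := by rw [hk0]; abel
        rw [this, hk1, Matrix.mulVec_sub]
        abel
      rw [Finset.sum_eq_single_of_mem ν₀ hν₀Γ (fun ν hν hne => ?_), if_pos ⟨⟨k1, hk1⟩, hy0⟩]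
      rw [if_neg]
      rintro ⟨hPx, -⟩
      exact hne (huniq ν ⟨hν, hPx⟩)
    · rw [if_neg hxy]
      refine Finset.sum_eq_zero fun ν hν => ?_
      rw [if_neg]
      rintro ⟨⟨k1, hk1⟩, ⟨k2, hk2⟩⟩
      refine hxy ⟨k1 - k2, ?_⟩
      rw [hk1, hk2, Matrix.mulVec_sub]
      abel
  -- character sum application
  have hmid : ∀ x ∈ h.support, ∀ y ∈ h.support,
      ∑ γ ∈ Γs, g x y * Complex.exp (-Complex.I * ∑ i, ((x i - y i : ℤ) : ℂ) * (γ i : ℂ))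
      = ((Λ.det.natAbs : ℕ) : ℂ) * (if ∃ k : Fin n → ℤ, x = y + Λ.mulVec k then g x y else 0) := by
    intro x _ y _
    rw [← Finset.mul_sum]
    have hcs := aux_char_sum n Λ hdet Γs hΓsdual hΓsrep (x - y)
    have hsum_eq : ∑ γ ∈ Γs, Complex.exp (-Complex.I * ∑ i, ((x i - y i : ℤ) : ℂ) * (γ i : ℂ))
        = ∑ γ ∈ Γs, Complex.exp (-Complex.I * ∑ i, (((x - y) i : ℤ) : ℂ) * (γ i : ℂ)) := rfl
    rw [hsum_eq, hcs]
    by_cases hc : ∃ k : Fin n → ℤ, x = y + Λ.mulVec k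
    · have hc' : ∃ k : Fin n → ℤ, x - y = Λ.mulVec k := by
        obtain ⟨k, hk⟩ := hc
        exact ⟨k, by rw [hk]; abel⟩
      rw [if_pos hc', if_pos hc]
      ring
    · have hc' : ¬∃ k : Fin n → ℤ, x - y = Λ.mulVec k := by
        rintro ⟨k, hk⟩
        exact hc ⟨k, by rw [← hk]; abel⟩
      rw [if_neg hc', if_neg hc]
      ring
  -- assemble
  rw [← Complex.ofReal_inj]
  push_cast
  calc ∑ ν ∈ Γ, ((Complex.normSq (polyphaseEval n Λ h ν ω) : ℝ) : ℂ)
      = ∑ ν ∈ Γ, ∑ x ∈ h.support.filter (fun x => ∃ k : Fin n → ℤ, x = ν + Λ.mulVec k),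
          ∑ y ∈ h.support.filter (fun x => ∃ k : Fin n → ℤ, x = ν + Λ.mulVec k), g x y :=
        Finset.sum_congr rfl fun ν _ => hL ν
    _ = ∑ x ∈ h.support, ∑ y ∈ h.support,
          (if ∃ k : Fin n → ℤ, x = y + Λ.mulVec k then g x y else 0) := hcosetL
    _ = ∑ γ ∈ Γs, ((Complex.normSq (maskEval n Λ h (ω + γ)) : ℝ) : ℂ) := by
        refine Eq.symm ?_
        calc ∑ γ ∈ Γs, ((Complex.normSq (maskEval n Λ h (ω + γ)) : ℝ) : ℂ)
            = ∑ γ ∈ Γs, (1 / ((Λ.det.natAbs : ℕ) : ℂ)) * ∑ x ∈ h.support, ∑ y ∈ h.support,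
                g x y * Complex.exp (-Complex.I * ∑ i, ((x i - y i : ℤ) : ℂ) * (γ i : ℂ)) :=
              Finset.sum_congr rfl fun γ _ => hR γ
          _ = (1 / ((Λ.det.natAbs : ℕ) : ℂ)) * ∑ γ ∈ Γs, ∑ x ∈ h.support, ∑ y ∈ h.support,
                g x y * Complex.exp (-Complex.I * ∑ i, ((x i - y i : ℤ) : ℂ) * (γ i : ℂ)) :=
              (Finset.mul_sum _ _ _).symm
          _ = (1 / ((Λ.det.natAbs : ℕ) : ℂ)) * ∑ x ∈ h.support, ∑ γ ∈ Γs, ∑ y ∈ h.support,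
                g x y * Complex.exp (-Complex.I * ∑ i, ((x i - y i : ℤ) : ℂ) * (γ i : ℂ)) := by
              congr 1
              exact Finset.sum_comm
          _ = (1 / ((Λ.det.natAbs : ℕ) : ℂ)) * ∑ x ∈ h.support, ∑ y ∈ h.support, ∑ γ ∈ Γs,
                g x y * Complex.exp (-Complex.I * ∑ i, ((x i - y i : ℤ) : ℂ) * (γ i : ℂ)) := by
              congr 1
              exact Finset.sum_congr rfl fun x _ => Finset.sum_comm
          _ = (1 / ((Λ.det.natAbs : ℕ) : ℂ)) * ∑ x ∈ h.support, ∑ y ∈ h.support,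
                ((Λ.det.natAbs : ℕ) : ℂ) *
                  (if ∃ k : Fin n → ℤ, x = y + Λ.mulVec k then g x y else 0) := by
              congr 1
              exact Finset.sum_congr rfl fun x hx =>
                Finset.sum_congr rfl fun y hy => hmid x hx y hy
          _ = ∑ x ∈ h.support, ∑ y ∈ h.support,
                (if ∃ k : Fin n → ℤ, x = y + Λ.mulVec k then g x y else 0) := by
              rw [Finset.mul_sum]
              refine Finset.sum_congr rfl fun x _ => ?_
              rw [Finset.mul_sum]
              refine Finset.sum_congr rfl fun y _ => ?_
              rw [← mul_assoc, one_div, inv_mul_cancel₀ hqC, one_mul]
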